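/- arXiv:2511.00722 — 2 statements merged into one kernel-verified Lean document; each statement's English description precedes it below -/
import Mathlib

section
/- Suppose 3 does not divide P, and let δ be the 3-adic valuation of P^2 + 2. Then for all natural numbers n ≥ 1 with 4 dividing n, the 3-adic valuation of u_n equals the 3-adic valuation of n plus δ. -/
def u (P : ℤ) : ℕ → ℤ
  | 0 => 0
  | 1 => 1
  | n + 2 => P * u P (n + 1) + u P n

def v (P : ℤ) : ℕ → ℤ
  | 0 => 2
  | 1 => P
  | n + 2 => P * v P (n + 1) + v P n

lemma u_add (P : ℤ) : ∀ m n, u P (m + n + 1) = u P (m+1) * u P (n+1) + u P m * u P n := by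
  intro m
  induction m using Nat.strong_induction_on with
  | _ m ih =>
    match m with
    | 0 => intro n; simp [u]
    | 1 =>
      intro n
      rw [show 1 + n + 1 = n + 2 from by omega, u]
      simp [u]
      try ring
    | k+2 =>
      intro n
      have h1 := ih k (by omega) n
      have h2 := ih (k+1) (by omega) n
      rw [show k + 2 + n + 1 = (k+n+1) + 2 from by omega, u,
        show k+n+1+1 = (k+1)+n+1 from by omega, h2, h1]
      simp only [u, show k+1+2 = (k+1)+2 from rfl, show k+2+1 = (k+1)+2 from rfl]
      ring

lemma cassini (P : ℤ) : ∀ m, u P (m+1)^2 - P * u P m * u P (m+1) - u P m ^ 2 = (-1)^m := by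
  intro m
  induction m with
  | zero => simp [u]
  | succ k ih =>
    rw [show k + 1 + 1 = k + 2 from rfl, u, pow_succ]
    linear_combination (-1) * ih

lemma u_triple (P : ℤ) (k : ℕ) :
    u P (3*(k+1)) = u P (k+1) * ((P^2+4) * u P (k+1)^2 + 3 * (-1)^(k+1)) := by
  have h1 := u_add P k k
  have h2 := u_add P (k+1) k
  have h3 := u_add P (2*k+1) (k+1)
  have hc := cassini P k
  have hu2 : u P (k+2) = P * u P (k+1) + u P k := by rw [u]
  rw [show 2*k+1+(k+1)+1 = 3*(k+1) from by omega] at h3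
  rw [show (k:ℕ)+1+k+1 = 2*k+1+1 from by omega] at h2
  rw [show (k:ℕ)+k+1 = 2*k+1 from by omega] at h1
  rw [h3, h2, h1, hu2, pow_succ]
  linear_combination (-3 * u P (k+1)) * hc

lemma u_key (P : ℤ) : ∀ k : ℕ, ∃ s t : ℤ,
    u P (4*k+4) = (k+1) * u P 4 * u P 5 ^ k + u P 4 ^ 2 * s ∧
    u P (4*k+5) = u P 5 ^ (k+1) + u P 4 * t := by
  intro k
  induction k with
  | zero => exact ⟨0, 0, by push_cast; ring, by push_cast; ring⟩
  | succ k ih =>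
    obtain ⟨s, t, hs, ht⟩ := ih
    have h8 := u_add P (4*k+4) 3
    have h9 := u_add P 4 (4*k+4)
    rw [show 4*k+4+3+1 = 4*(k+1)+4 from by omega, show 4*k+4+1 = 4*k+5 from rfl,
      show (3:ℕ)+1 = 4 from rfl] at h8
    rw [show 4+(4*k+4)+1 = 4*(k+1)+5 from by omega, show (4:ℕ)+1 = 5 from rfl,
      show 4*k+4+1 = 4*k+5 from rfl] at h9
    have hu5 : u P 5 = P * u P 4 + u P 3 := by rw [show (5:ℕ) = 3+2 from rfl, u]
    refine ⟨t + u P 3 * s - (k+1) * P * u P 5 ^ k, u P 5 * t + u P (4*k+4), ?_, ?_⟩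
    · rw [h8, hs, ht]
      push_cast
      linear_combination (-((k:ℤ)+1) * u P 5 ^ k * u P 4) * hu5
    · rw [h9, ht]
      push_cast
      ring

lemma val_eq_of {x : ℤ} {d : ℕ} (h1 : (3:ℤ)^d ∣ x) (h2 : ¬ (3:ℤ)^(d+1) ∣ x) :
    padicValInt 3 x = d := by
  haveI : Fact (Nat.Prime 3) := ⟨by norm_num⟩
  have hx : x ≠ 0 := by rintro rfl; exact h2 (dvd_zero _)
  have ha := (padicValInt_dvd_iff (p := 3) d x).mp h1
  have hb : ¬ (x = 0 ∨ d + 1 ≤ padicValInt 3 x) :=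
    fun h => h2 ((padicValInt_dvd_iff (p := 3) (d+1) x).mpr h)
  push_neg at hb
  rcases ha with h | h
  · exact absurd h hx
  · omega

lemma exists_rep (x : ℤ) (hx : x ≠ 0) :
    ∃ w : ℤ, x = 3^(padicValInt 3 x) * w ∧ ¬ (3:ℤ) ∣ w := by
  haveI : Fact (Nat.Prime 3) := ⟨by norm_num⟩
  obtain ⟨w, hw⟩ := padicValInt_dvd (p := 3) x
  refine ⟨w, by exact_mod_cast hw, fun hd => ?_⟩
  have key : ((3:ℕ):ℤ)^(padicValInt 3 x + 1) ∣ x := by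
    conv_rhs => rw [hw]
    rw [pow_succ]
    exact mul_dvd_mul_left _ hd
  have := (padicValInt_dvd_iff (p := 3) (padicValInt 3 x + 1) x).mp key
  rcases this with h | h
  · exact hx h
  · omega

lemma three_dvd (P : ℤ) (hP : ¬ (3 ∣ P)) : (3:ℤ) ∣ P^2 + 2 := by
  have h : P % 3 = 1 ∨ P % 3 = 2 := by omega
  obtain ⟨q, hq⟩ : ∃ q, P = 3*q + P % 3 := ⟨P / 3, by omega⟩
  rcases h with h | h
  · exact ⟨3*q^2 + 2*q + 1, by rw [hq, h]; ring⟩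
  · exact ⟨3*q^2 + 4*q + 2, by rw [hq, h]; ring⟩

lemma delta_pos (P : ℤ) (hP : ¬ (3 ∣ P)) : 1 ≤ padicValInt 3 (P^2 + 2) := by
  have hne : P^2 + 2 ≠ 0 := by positivity
  obtain ⟨w, hw, hw3⟩ := exists_rep (P^2+2) hne
  by_contra h
  have h0 : padicValInt 3 (P^2+2) = 0 := by omega
  rw [h0, pow_zero, one_mul] at hw
  exact hw3 (hw ▸ three_dvd P hP)

lemma u5_not_dvd (P : ℤ) (hP : ¬ (3 ∣ P)) : ¬ (3:ℤ) ∣ u P 5 := by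
  intro h
  have hu5 : u P 5 = (P^2+2)*(P^2+1) - 1 := by norm_num [u]; ring
  have h2 : (3:ℤ) ∣ (P^2+2)*(P^2+1) := (three_dvd P hP).mul_right _
  have : (3:ℤ) ∣ 1 := by
    have := dvd_sub h2 h
    rw [hu5] at this
    simpa using this
  norm_num at this

lemma u_base (P : ℤ) (hP : ¬ (3 ∣ P)) (k : ℕ) (hk : ¬ 3 ∣ (k+1)) :
    padicValInt 3 (u P (4*(k+1))) = padicValInt 3 (P^2 + 2) := by
  have hp3 : Prime (3:ℤ) := Int.prime_three
  set d := padicValInt 3 (P^2+2) with hd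
  have hd1 : 1 ≤ d := delta_pos P hP
  have hne : P^2 + 2 ≠ 0 := by positivity
  obtain ⟨w, hw, hw3⟩ := exists_rep (P^2+2) hne
  have hu4 : u P 4 = P * (P^2 + 2) := by norm_num [u]; ring
  obtain ⟨s, t, hs, ht⟩ := u_key P k
  rw [show 4*(k+1) = 4*k+4 from by omega, hs]
  apply val_eq_of
  · have : (3:ℤ)^d ∣ u P 4 := ⟨P * w, by rw [hu4, hw]; ring⟩
    exact dvd_add ((this.mul_left _).mul_right _)
      ((this.trans (dvd_pow_self _ two_ne_zero)).mul_right s)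
  · intro hdvd
    have hsq : (3:ℤ)^(d+1) ∣ u P 4 ^ 2 * s := by
      refine Dvd.dvd.mul_right ?_ s
      have : (3:ℤ)^(d+1) ∣ ((3:ℤ)^d)^2 := by
        rw [← pow_mul]
        exact pow_dvd_pow 3 (by omega)
      exact this.trans (pow_dvd_pow_of_dvd ⟨P * w, by rw [hu4, hw]; ring⟩ 2)
    have h1 : (3:ℤ)^(d+1) ∣ (k+1) * u P 4 * u P 5 ^ k := by
      have := dvd_sub hdvd hsq
      simpa using this
    have heq : ((k:ℤ)+1) * u P 4 * u P 5 ^ k = (3:ℤ)^d * (((k:ℤ)+1) * P * w * u P 5 ^ k) := by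
      rw [hu4, hw]; ring
    have h2 : (3:ℤ)^d * 3 ∣ (3:ℤ)^d * (((k:ℤ)+1) * P * w * u P 5 ^ k) := by
      rw [← pow_succ, ← heq]
      exact_mod_cast h1
    have h3 : (3:ℤ) ∣ ((k:ℤ)+1) * P * w * u P 5 ^ k :=
      (mul_dvd_mul_iff_left (pow_ne_zero d (by norm_num : (3:ℤ) ≠ 0))).mp h2
    rcases hp3.dvd_mul.mp h3 with h | h
    · rcases hp3.dvd_mul.mp h with h | h
      · rcases hp3.dvd_mul.mp h with h | h
        · refine hk ?_
          have : ((3:ℤ)) ∣ ((k:ℤ)+1) := h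
          exact_mod_cast this
        · exact hP h
      · exact hw3 h
    · exact u5_not_dvd P hP (hp3.dvd_of_dvd_pow h)

lemma u_step (P : ℤ) (hP : ¬ (3 ∣ P)) (j : ℕ) (hj : 1 ≤ j) (c : ℕ) (hc : 1 ≤ c)
    (a : ℤ) (ha : ¬ (3:ℤ) ∣ a) (hu : u P (2*j) = 3^c * a) :
    padicValInt 3 (u P (3*(2*j))) = c + 1 := by
  have hp3 : Prime (3:ℤ) := Int.prime_three
  obtain ⟨i, rfl⟩ : ∃ i, j = i + 1 := ⟨j - 1, by omega⟩
  obtain ⟨d, rfl⟩ : ∃ d, c = d + 1 := ⟨c - 1, by omega⟩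
  have htr := u_triple P (2*i+1)
  rw [show 2*i+1+1 = 2*(i+1) from by omega] at htr
  have hpow : (-1:ℤ)^(2*(i+1)) = 1 := by rw [pow_mul]; norm_num
  rw [htr, hpow, hu, mul_one]
  have hfact : 3^(d+1)*a * ((P^2+4) * (3^(d+1)*a)^2 + 3)
      = 3^(d+1+1) * (a * ((P^2+4)*3^(2*d+1)*a^2 + 1)) := by ring
  rw [hfact]
  set b : ℤ := (P^2+4)*3^(2*d+1)*a^2 + 1 with hbdef
  have hb3 : ¬ (3:ℤ) ∣ b := by
    intro h
    have h1 : (3:ℤ) ∣ (P^2+4)*3^(2*d+1)*a^2 := by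
      refine Dvd.dvd.mul_right ?_ (a^2)
      exact (dvd_pow_self (3:ℤ) (by omega : 2*d+1 ≠ 0)).mul_left _
    have h2 : (3:ℤ) ∣ 1 := by
      have := dvd_sub h h1
      simpa [hbdef] using this
    norm_num at h2
  apply val_eq_of
  · exact dvd_mul_right _ _
  · intro h
    rw [pow_succ] at h
    have h3 : (3:ℤ) ∣ a * b :=
      (mul_dvd_mul_iff_left (pow_ne_zero (d+1+1) (by norm_num : (3:ℤ) ≠ 0))).mp h
    rcases hp3.dvd_mul.mp h3 with h | h
    · exact ha h
    · exact hb3 h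

theorem padicValInt_u (P : ℤ) (hP : ¬ (3 ∣ P)) (n : ℕ) (hn : 1 ≤ n) (h4 : 4 ∣ n) :
    padicValInt 3 (u P n) = padicValNat 3 n + padicValInt 3 (P ^ 2 + 2) := by
  haveI : Fact (Nat.Prime 3) := ⟨by norm_num⟩
  induction n using Nat.strong_induction_on with
  | _ n ih =>
    by_cases h3 : 3 ∣ n
    · obtain ⟨m, rfl⟩ := h3
      have hm1 : 1 ≤ m := by omega
      have hm4 : 4 ∣ m := Nat.Coprime.dvd_of_dvd_mul_left (by norm_num : Nat.Coprime 4 3) h4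
      have ihm := ih m (by omega) hm1 hm4
      have hδ : 1 ≤ padicValInt 3 (P^2+2) := delta_pos P hP
      have hum : u P m ≠ 0 := by
        intro h
        rw [h, show padicValInt 3 (0:ℤ) = 0 from by simp [padicValInt]] at ihm
        omega
      obtain ⟨a, ha, ha3⟩ := exists_rep (u P m) hum
      obtain ⟨q, hq⟩ := hm4
      have step := u_step P hP (2*q) (by omega) (padicValInt 3 (u P m)) (by omega) a ha3
        (by rw [show 2*(2*q) = m from by omega]; exact ha)
      rw [show (3:ℕ)*(2*(2*q)) = 3*m from by omega] at step
      rw [step, ihm, padicValNat.mul (by norm_num) (by omega), padicValNat.self (by norm_num)]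
      omega
    · obtain ⟨K, rfl⟩ := h4
      have hK3 : ¬ 3 ∣ K := fun h => h3 (h.mul_left 4)
      obtain ⟨k, rfl⟩ : ∃ k, K = k+1 := ⟨K-1, by omega⟩
      rw [padicValNat.eq_zero_of_not_dvd h3, u_base P hP k hK3, zero_add]
end

section
/- Suppose 3 does not divide P, and let δ be the 3-adic valuation of P^2 + 2. Then for all natural numbers n with n ≡ 2 (mod 4), the 3-adic valuation of v_n equals the 3-adic valuation of n plus δ. -/
open Polynomial

noncomputable def V (c : ℤ) (m : ℕ) : ℤ := (dickson 1 1 m).eval c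

lemma V_zero (c : ℤ) : V c 0 = 2 := by simp [V, dickson_zero]

lemma V_one (c : ℤ) : V c 1 = c := by simp [V, dickson_one]

lemma V_add_two (c : ℤ) (m : ℕ) : V c (m+2) = c * V c (m+1) - V c m := by
  simp [V, dickson_add_two]

lemma V_add_four (c : ℤ) (m : ℕ) : V c (m+4) = (c^2-2) * V c (m+2) - V c m := by
  have h1 := V_add_two c (m+2)
  have h2 := V_add_two c (m+1)
  have h3 := V_add_two c m
  have : m + 4 = m + 2 + 2 := rfl
  rw [this, h1]
  linear_combination c * h2 + h3

lemma V_mul3 (c : ℤ) (k : ℕ) : V c (3*k) = (V c k)^3 - 3*(V c k) := by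
  have h3 : ∀ x : ℤ, (dickson 1 (1:ℤ) 3).eval x = x^3 - 3*x := by
    intro x
    rw [show (3:ℕ) = 1+2 from rfl, dickson_add_two, show (1:ℕ)+1 = 0+2 from rfl,
      dickson_add_two, dickson_zero, dickson_one]
    simp; ring
  rw [V, dickson_one_one_mul, eval_comp]
  exact h3 _

lemma V_ge (c : ℤ) (hc : 3 ≤ c) : ∀ m, 2 ≤ V c m ∧ V c m ≤ V c (m+1)
  | 0 => by constructor <;> simp [V_zero, V_one] <;> omega
  | m+1 => by
    have ih := V_ge c hc m
    have h := V_add_two c m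
    have h3 : 3 * V c (m+1) ≤ c * V c (m+1) :=
      mul_le_mul_of_nonneg_right hc (by omega)
    simp only [show m + 1 + 1 = m + 2 from rfl]
    constructor <;> omega

lemma V_odd_mod (c M : ℤ) (hM : M ∣ c^3) :
    ∀ j : ℕ, M ∣ (V c (2*j+1) - (-1)^j * (2*(j:ℤ)+1) * c) := by
  have key : ∀ j : ℕ, (M ∣ (V c (2*j+1) - (-1)^j * (2*(j:ℤ)+1) * c)) ∧
      (M ∣ (V c (2*(j+1)+1) - (-1)^(j+1) * (2*((j:ℤ)+1)+1) * c)) := by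
    intro j
    induction j with
    | zero =>
      have hV2 : V c 2 = c^2 - 2 := by
        have h := V_add_two c 0
        simp [V_zero, V_one] at h; rw [h]; ring
      have hV3 : V c 3 = c^3 - 3*c := by
        have h := V_add_two c 1; rw [show (1:ℕ)+2 = 3 from rfl, show (1:ℕ)+1 = 2 from rfl] at h
        rw [h, hV2, V_one]; ring
      constructor
      · simp [V_one]
      · simp only [Nat.cast_zero]
        rw [show 2*(0+1)+1 = 3 from rfl, hV3]
        convert hM using 1; ring
    | succ j ih =>
      refine ⟨ih.2, ?_⟩
      obtain ⟨r, hr⟩ := ih.1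
      obtain ⟨s, hs⟩ := ih.2
      obtain ⟨t, ht⟩ := hM
      refine ⟨(c^2-2) * s - r + (-1)^(j+1) * (2*(j:ℤ)+3) * t, ?_⟩
      have hidx : 2*(j+1+1)+1 = (2*j+1) + 4 := by omega
      rw [hidx, V_add_four]
      have hr' : V c (2*j+1) = (-1)^j * (2*(j:ℤ)+1) * c + M * r := by linarith
      have hs' : V c (2*(j+1)+1) = (-1)^(j+1) * (2*((j:ℤ)+1)+1) * c + M * s := by linarith
      have hidx2 : 2*j+1+2 = 2*(j+1)+1 := by omega
      rw [hidx2, hr', hs']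
      push_cast
      linear_combination ((-1:ℤ))^(j+1) * (2*(j:ℤ)+3) * ht
  exact fun j => (key j).1

lemma pv_3pow_mul (k : ℕ) (w : ℤ) (hw : ¬ (3:ℤ) ∣ w) : padicValInt 3 (3^k * w) = k := by
  have hw0 : w ≠ 0 := by rintro rfl; exact hw (dvd_zero _)
  rw [padicValInt.mul (a := (3:ℤ)^k) (by positivity) hw0]
  have h1 : padicValInt 3 ((3:ℤ)^k) = k := by
    rw [show ((3:ℤ))^k = (((3^k : ℕ)) : ℤ) by push_cast; ring, padicValInt.of_nat,
      padicValNat.prime_pow]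
  have h2 : padicValInt 3 w = 0 := padicValInt.eq_zero_of_not_dvd (by exact_mod_cast hw)
  omega

lemma exists_decomp (z : ℤ) (hz : z ≠ 0) :
    ∃ w : ℤ, z = 3^(padicValInt 3 z) * w ∧ ¬ (3:ℤ) ∣ w := by
  obtain ⟨w, hw⟩ := padicValInt_dvd (p := 3) z
  refine ⟨w, by exact_mod_cast hw, ?_⟩
  intro ⟨y, hy⟩
  have : ((3:ℕ):ℤ)^(padicValInt 3 z + 1) ∣ z := by
    refine ⟨y, ?_⟩
    conv_lhs => rw [hw, hy]
    push_cast; ring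
  rw [padicValInt_dvd_iff] at this
  omega

lemma pv_step (z : ℤ) (hz : z ≠ 0) (h1 : 1 ≤ padicValInt 3 z) :
    padicValInt 3 (z^3 - 3*z) = padicValInt 3 z + 1 := by
  obtain ⟨w, hw, hw3⟩ := exists_decomp z hz
  obtain ⟨e', he'⟩ : ∃ e', padicValInt 3 z = e' + 1 := ⟨padicValInt 3 z - 1, by omega⟩
  have hsq : z^2 - 3 = 3 * (3^(2*e'+1) * w^2 - 1) := by
    rw [hw, he']; ring
  have hne : z^2 - 3 ≠ 0 := by
    rw [hsq]
    intro h
    have h3 : (3:ℤ) ∣ 3^(2*e'+1) * w^2 := dvd_mul_of_dvd_left (dvd_pow_self 3 (by omega)) _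
    obtain ⟨a, ha⟩ := h3
    rw [ha] at h
    omega
  have : z^3 - 3*z = z * (z^2 - 3) := by ring
  rw [this, padicValInt.mul hz hne]
  congr 1
  rw [hsq, show (3:ℤ) * (3^(2*e'+1) * w^2 - 1) = 3^1 * (3^(2*e'+1) * w^2 - 1) by ring]
  apply pv_3pow_mul
  intro h
  have h3 : (3:ℤ) ∣ 3^(2*e'+1) * w^2 := dvd_mul_of_dvd_left (dvd_pow_self 3 (by omega)) _
  have : (3:ℤ) ∣ 1 := (dvd_sub_right h3).mp h |>.neg_right.neg_right
  omega

lemma nat_decomp (m : ℕ) (hm : m ≠ 0) :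
    ∃ m₀ : ℕ, m = 3^(padicValNat 3 m) * m₀ ∧ ¬ 3 ∣ m₀ := by
  obtain ⟨m₀, hw⟩ := pow_padicValNat_dvd (p := 3) (n := m)
  refine ⟨m₀, hw, ?_⟩
  intro ⟨y, hy⟩
  have : 3^(padicValNat 3 m + 1) ∣ m := by
    refine ⟨y, ?_⟩
    conv_lhs => rw [hw, hy]
    ring
  rw [padicValNat_dvd_iff] at this
  omega

lemma pv_V (c : ℤ) (hc : 3 ≤ c) (d : ℕ) (hd : 1 ≤ d) (hdc : padicValInt 3 c = d) :
    ∀ t m₀ : ℕ, m₀ % 2 = 1 → ¬ 3 ∣ m₀ → padicValInt 3 (V c (3^t * m₀)) = d + t := by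
  intro t
  induction t with
  | zero =>
    intro m₀ hodd h3m
    obtain ⟨j, hj⟩ : ∃ j, m₀ = 2*j+1 := ⟨m₀/2, by omega⟩
    obtain ⟨e, hce, he3⟩ := exists_decomp c (by omega)
    rw [hdc] at hce
    have hM : ((3:ℤ)^(d+1)) ∣ c^3 := by
      refine dvd_trans (pow_dvd_pow 3 (show d+1 ≤ 3*d by omega)) ?_
      rw [hce]
      exact Dvd.intro (e^3) (by ring)
    obtain ⟨r, hr⟩ := V_odd_mod c (3^(d+1)) hM j
    have hval : V c (2*j+1) = 3^d * ((-1)^j * (2*(j:ℤ)+1) * e + 3 * r) := by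
      have : V c (2*j+1) = (-1)^j * (2*(j:ℤ)+1) * c + 3^(d+1) * r := by linarith
      rw [this, hce]; ring
    rw [pow_zero, one_mul, hj, hval]
    apply pv_3pow_mul
    intro hdvd
    have h3 : Prime (3:ℤ) := Int.prime_three
    have h1 : (3:ℤ) ∣ (-1)^j * (2*(j:ℤ)+1) * e := by
      have := (dvd_add_right (Dvd.intro r rfl)).mp (by rwa [add_comm] at hdvd)
      exact this
    rcases (h3.dvd_mul.mp h1) with h | h
    · rcases h3.dvd_mul.mp h with h' | h'
      · have := h3.dvd_of_dvd_pow h'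
        omega
      · have hm : ((m₀ : ℕ) : ℤ) = 2*(j:ℤ)+1 := by rw [hj]; push_cast; ring
        have : (3:ℤ) ∣ ((m₀ : ℕ) : ℤ) := by rw [hm]; exact h'
        exact h3m (by exact_mod_cast this)
    · exact he3 h
  | succ t ih =>
    intro m₀ hodd h3m
    have hk := ih m₀ hodd h3m
    have hne : V c (3^t * m₀) ≠ 0 := by have := (V_ge c hc (3^t * m₀)).1; omega
    rw [show 3^(t+1) * m₀ = 3 * (3^t * m₀) by ring, V_mul3,
      pv_step _ hne (by omega), hk]
    omega

lemma v_add_four (P : ℤ) (n : ℕ) : v P (n+4) = (P^2+2) * v P (n+2) - v P n := by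
  simp [v]; ring

lemma v_two_mul (P : ℤ) : ∀ m : ℕ, v P (2*m) = V (P^2+2) m ∧ v P (2*(m+1)) = V (P^2+2) (m+1)
  | 0 => by
    constructor
    · simp [v, V_zero]
    · rw [show 2*(0+1) = 2 from rfl, V_one]
      simp [v]; ring
  | m+1 => by
    have ih := v_two_mul P m
    refine ⟨ih.2, ?_⟩
    have h4 : v P (2*m+4) = (P^2+2) * v P (2*m+2) - v P (2*m) := v_add_four P (2*m)
    have hV := V_add_two (P^2+2) m
    rw [show 2*(m+1+1) = 2*m+4 by ring, h4,
      show 2*m+2 = 2*(m+1) by ring, ih.1, ih.2, hV]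

theorem padicValInt_v (P : ℤ) (hP : ¬ (3 ∣ P)) (n : ℕ) (hn : n % 4 = 2) :
    padicValInt 3 (v P n) = padicValNat 3 n + padicValInt 3 (P ^ 2 + 2) := by
  set c : ℤ := P^2 + 2 with hcdef
  have hP0 : P ≠ 0 := by rintro rfl; exact hP (dvd_zero _)
  have hP2 : 1 ≤ P^2 := by rcases lt_or_gt_of_ne hP0 with h | h <;> nlinarith
  have hc : 3 ≤ c := by omega
  have h3c : (3:ℤ) ∣ c := by
    have key : ∀ x : ZMod 3, x ≠ 0 → x^2 + 2 = 0 := by decide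
    have hPz : (P : ZMod 3) ≠ 0 := by
      intro h
      exact hP (by exact_mod_cast (ZMod.intCast_zmod_eq_zero_iff_dvd P 3).mp h)
    have := key (P : ZMod 3) hPz
    have h2 : ((c : ℤ) : ZMod 3) = 0 := by push_cast; rw [hcdef]; push_cast; exact this
    exact_mod_cast (ZMod.intCast_zmod_eq_zero_iff_dvd c 3).mp h2
  set d : ℕ := padicValInt 3 c with hd
  have hd1 : 1 ≤ d := by
    have h1 : ((3:ℕ):ℤ)^1 ∣ c := by push_cast; simpa using h3c
    rw [padicValInt_dvd_iff] at h1
    omega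
  obtain ⟨m, hm, hmodd⟩ : ∃ m, n = 2*m ∧ m % 2 = 1 := ⟨n/2, by omega, by omega⟩
  have hm0 : m ≠ 0 := by omega
  obtain ⟨m₀, hm₀, h3m₀⟩ := nat_decomp m hm0
  have hm₀odd : m₀ % 2 = 1 := by
    rcases Nat.even_or_odd m₀ with he | ho
    · exfalso
      have hEv : Even m := by rw [hm₀]; exact he.mul_left _
      have := Nat.even_iff.mp hEv
      omega
    · exact Nat.odd_iff.mp ho
  have hvV : v P n = V c m := by rw [hm]; exact (v_two_mul P m).1
  have hpvn : padicValNat 3 n = padicValNat 3 m := by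
    rw [hm, padicValNat.mul (by norm_num) hm0, padicValNat.eq_zero_of_not_dvd (by norm_num)]
    omega
  rw [hvV, hpvn]
  conv_lhs => rw [hm₀]
  rw [pv_V c hc d hd1 rfl (padicValNat 3 m) m₀ hm₀odd h3m₀]
  omega
end
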